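/- (Weitzenböck-type identity) For all natural numbers k ≥ 1 and q ≥ 1 with n = k + q, the identity d̆*_q ∘ d̆_q + d̆_{q−1} ∘ d̆*_{q−1} = (k + q)·id holds on H_{k,q}. -/

import Mathlib

open scoped BigOperators

noncomputable section

variable (F : Type*) [Field F] [CharZero F] (H : Type*) [AddCommGroup H] [Module F H]

/-- The `n`-th tensor power of `H` over `F`. -/
abbrev TP (n : ℕ) : Type _ := PiTensorProduct F (fun _ : Fin n => H)

/-- The action of a permutation `σ ∈ S_n` on the `n`-th tensor power,
permuting the tensor factors. -/
def permMap (n : ℕ) (σ : Equiv.Perm (Fin n)) : TP F H n →ₗ[F] TP F H n :=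
  (PiTensorProduct.reindex F (fun _ : Fin n => H) σ).toLinearMap

/-- Identification of tensor powers of equal degrees. -/
def tpCast {m m' : ℕ} (hm : m = m') : TP F H m →ₗ[F] TP F H m' :=
  (PiTensorProduct.reindex F (fun _ : Fin m => H) (finCongr hm)).toLinearMap

/-- The permutations of `{1, …, n}` moving only positions in `a`. -/
def permsOn (n : ℕ) (a : Finset (Fin n)) : Finset (Equiv.Perm (Fin n)) :=
  Finset.univ.filter fun σ => ∀ i, i ∉ a → σ i = i

/-- `S_a`: symmetrisation over the positions in `a` (the average over all
permutations of the positions in `a`, fixing the other positions). -/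
def symOn (n : ℕ) (a : Finset (Fin n)) : TP F H n →ₗ[F] TP F H n :=
  (a.card.factorial : F)⁻¹ • ∑ σ ∈ permsOn n a, permMap F H n σ

/-- `A_a`: skew-symmetrisation over the positions in `a` (the signed average over
all permutations of the positions in `a`, fixing the other positions). -/
def altOn (n : ℕ) (a : Finset (Fin n)) : TP F H n →ₗ[F] TP F H n :=
  (a.card.factorial : F)⁻¹ • ∑ σ ∈ permsOn n a, (Equiv.Perm.sign σ : ℤ) • permMap F H n σ

/-- The first `k` positions of `{1, …, n}`. -/
def firstSet (n k : ℕ) : Finset (Fin n) := Finset.univ.filter fun i => (i : ℕ) < k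

/-- The last `m` positions of `{1, …, n}`. -/
def lastSet (n m : ℕ) : Finset (Fin n) := Finset.univ.filter fun i => n - m ≤ (i : ℕ)

/-- `H^{⊙a,∧aᶜ}`: the image of `S_a ∘ A_{aᶜ}`, the subspace of `n`-tensors symmetric in
the positions of `a` and skew-symmetric in the positions of `aᶜ`. -/
def Hgen (n : ℕ) (a : Finset (Fin n)) : Submodule F (TP F H n) :=
  LinearMap.range (symOn F H n a ∘ₗ altOn F H n aᶜ)

/-- `H_{k,n-k} = H^{⊙k} ⊗ H^{∧(n-k)}`: the subspace of `n`-tensors symmetric in the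
first `k` positions and skew-symmetric in the remaining positions. -/
def Hmix (n k : ℕ) : Submodule F (TP F H n) := Hgen F H n (firstSet n k)

/-- `H^{⊙[k],∧[n-k]}`: the span of the subspaces `H^{⊙a,∧aᶜ}` over all `k`-element
subsets `a ⊆ {1, …, n}`. -/
def HmixSpan (n k : ℕ) : Submodule F (TP F H n) :=
  ⨆ a ∈ {a : Finset (Fin n) | a.card = k}, Hgen F H n a

/-- The global operator whose restriction to `H_{k,q}` (with `m = q + 1`, `n = k + q`)
is `d̆_q`: skew-symmetrisation of the last `m` positions, scaled by `m`. -/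
def dOp (n m : ℕ) : TP F H n →ₗ[F] TP F H n := (m : F) • altOn F H n (lastSet n m)

/-- The global operator whose restriction to `H_{k-1,q+1}` (with `m = k`, `n = k + q`)
is `d̆*_q`: symmetrisation of the first `m` positions, scaled by `m`. -/
def dStarOp (n m : ℕ) : TP F H n →ₗ[F] TP F H n := (m : F) • symOn F H n (firstSet n m)

/-- The elementary element `h₁⊙…⊙h_k ⊗ x₁∧…∧x_q` of `H_{k,q} ⊆ H^{⊗(k+q)}`. -/
def elem (k q : ℕ) (h : Fin k → H) (x : Fin q → H) : TP F H (k + q) :=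
  ∑ ρ : Equiv.Perm (Fin k), ∑ τ : Equiv.Perm (Fin q),
    (Equiv.Perm.sign τ : ℤ) •
      (PiTensorProduct.tprod F (Fin.append (h ∘ ρ) (x ∘ τ)) : TP F H (k + q))

/-!
`S_a` and `A_a` both average over the permutations of `a` against a character `χ` (trivial,
resp. the sign), so they are treated together. Sorting the permutations of `a ∋ p` by the image
of `p` gives `|a| · avg_χ(a) u = ∑_{j ∈ a} χ(p j) (p j) u` as soon as `u` already transforms by
`χ` under the permutations of `a ∖ {p}`.

Write `P` for the first `k` positions, `Q` for the last `q`, `p₁` for the last position of `P`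
and `p₂` for the first of `Q`; an element `v` of `H_{k,q}` is fixed by the permutations of `P` and
transforms by the sign under those of `Q`. Expanding both composites as above, the term `j = p₁`
of `d̆* d̆ v` and the term `i = p₂` of `d̆ d̆* v` contribute `k v` and `q v`. The remaining terms,
indexed by `i ∈ P` and `j ∈ Q`, cancel in pairs: `(p₁ i)(p₁ j) = (p₂ j)(p₂ i) · (p₁ i)(p₂ j)`,
the last factor acts on `v` by `sgn (p₂ j)`, and `sgn (p₁ j) = -1`.
-/

open Equiv Finset

theorem swap_mul_swap_eq {α : Type*} [DecidableEq α] {p₁ p₂ i j : α}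
    (h₁₂ : p₁ ≠ p₂) (h₁j : p₁ ≠ j) (hi₂ : i ≠ p₂) (hij : i ≠ j) :
    swap p₁ i * swap p₁ j = swap p₂ j * swap p₂ i * (swap p₁ i * swap p₂ j) := by
  have hL : swap p₁ i * swap p₁ j = swap i j * swap p₁ i := by
    rw [mul_swap_eq_swap_mul, swap_apply_left, swap_apply_of_ne_of_ne h₁j.symm hij.symm]
  have hcomm : swap p₁ i * swap p₂ j = swap p₂ j * swap p₁ i := by
    rw [mul_swap_eq_swap_mul, swap_apply_of_ne_of_ne h₁₂.symm hi₂.symm,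
      swap_apply_of_ne_of_ne h₁j.symm hij.symm]
  have hR : swap p₂ j * swap p₂ i * swap p₂ j = swap j i := by
    rw [mul_swap_eq_swap_mul (swap p₂ j) p₂ i, swap_apply_left,
      swap_apply_of_ne_of_ne hi₂ hij, mul_assoc, swap_mul_self, mul_one]
  rw [hL, hcomm, ← mul_assoc, hR, swap_comm]

theorem int_units_smul_smul_self {R M : Type*} [Ring R] [AddCommGroup M] [Module R M]
    (ε : ℤˣ) (x : M) : ((ε : ℤ) : R) • ((ε : ℤ) : R) • x = x := by
  rw [smul_smul, ← Int.cast_mul, ← Units.val_mul, Int.units_mul_self, Units.val_one, Int.cast_one,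
    one_smul]

section

variable {n : ℕ} {a b : Finset (Fin n)} {σ τ g : Perm (Fin n)} {p : Fin n}

theorem mem_permsOn : σ ∈ permsOn n a ↔ ∀ i ∉ a, σ i = i := by
  simp [permsOn]

theorem mul_mem_permsOn (hσ : σ ∈ permsOn n a) (hτ : τ ∈ permsOn n a) :
    σ * τ ∈ permsOn n a :=
  mem_permsOn.2 fun i hi => by
    rw [Perm.mul_apply, mem_permsOn.1 hτ i hi, mem_permsOn.1 hσ i hi]

theorem inv_mem_permsOn (hσ : σ ∈ permsOn n a) : σ⁻¹ ∈ permsOn n a :=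
  mem_permsOn.2 fun i hi => by rw [Perm.inv_eq_iff_eq, mem_permsOn.1 hσ i hi]

theorem permsOn_mono (hba : b ⊆ a) : permsOn n b ⊆ permsOn n a :=
  fun _ hσ => mem_permsOn.2 fun i hi => mem_permsOn.1 hσ i (fun h => hi (hba h))

theorem swap_mem_permsOn {i j : Fin n} (hi : i ∈ a) (hj : j ∈ a) : swap i j ∈ permsOn n a :=
  mem_permsOn.2 fun _ hx => swap_apply_of_ne_of_ne (by rintro rfl; exact hx hi)
    (by rintro rfl; exact hx hj)

theorem apply_mem_of_mem_permsOn (hσ : σ ∈ permsOn n a) {i : Fin n} (hi : i ∈ a) : σ i ∈ a := by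
  by_contra h
  rw [σ.injective (mem_permsOn.1 hσ (σ i) h)] at h
  exact h hi

theorem permsOn_eq_image_ofSubtype :
    permsOn n a = univ.image (Perm.ofSubtype : Perm {i // i ∈ a} →* Perm (Fin n)) := by
  ext σ
  rw [mem_permsOn, mem_image]
  simp only [mem_univ, true_and]
  rw [← MonoidHom.mem_range, Perm.mem_range_ofSubtype_iff]
  simp only [Set.subset_def, Finset.mem_coe, Perm.mem_support]
  exact ⟨fun h i hi => by_contra fun h' => hi (h i h'),
    fun h i hi => by_contra fun h' => hi (h i h')⟩

theorem card_permsOn : #(permsOn n a) = (#a).factorial := by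
  rw [permsOn_eq_image_ofSubtype, card_image_of_injective _ Perm.ofSubtype_injective, card_univ,
    Fintype.card_perm, Fintype.card_coe]

theorem sum_permsOn_mul_left {M : Type*} [AddCommMonoid M] (hg : g ∈ permsOn n a)
    (f : Perm (Fin n) → M) : ∑ σ ∈ permsOn n a, f (g * σ) = ∑ σ ∈ permsOn n a, f σ :=
  sum_nbij' (g * ·) (g⁻¹ * ·) (fun _ hσ => mul_mem_permsOn hg hσ)
    (fun _ hσ => mul_mem_permsOn (inv_mem_permsOn hg) hσ) (fun _ _ => inv_mul_cancel_left g _)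
    (fun _ _ => mul_inv_cancel_left g _) (fun _ _ => rfl)

theorem commute_of_mem_permsOn (hg : ∀ i ∈ a, g i = i) (hσ : σ ∈ permsOn n a) : Commute g σ :=
  Perm.Disjoint.commute fun i => (em (i ∈ a)).imp (hg i) (mem_permsOn.1 hσ i)

theorem mem_permsOn_erase : σ ∈ permsOn n (a.erase p) ↔ σ ∈ permsOn n a ∧ σ p = p := by
  simp only [mem_permsOn, mem_erase]
  grind

theorem sum_permsOn_eq_sum_sum_swap_mul {M : Type*} [AddCommMonoid M] (hp : p ∈ a)
    (f : Perm (Fin n) → M) :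
    ∑ σ ∈ permsOn n a, f σ = ∑ j ∈ a, ∑ h ∈ permsOn n (a.erase p), f (swap p j * h) := by
  rw [← sum_product']
  refine sum_nbij' (fun σ => (σ p, swap p (σ p) * σ)) (fun x => swap p x.1 * x.2) ?_ ?_ ?_ ?_ ?_
  · intro σ hσ
    refine mem_product.2 ⟨apply_mem_of_mem_permsOn hσ hp, mem_permsOn_erase.2 ⟨?_, ?_⟩⟩
    · exact mul_mem_permsOn (swap_mem_permsOn hp (apply_mem_of_mem_permsOn hσ hp)) hσ
    · simp
  · intro x hx
    obtain ⟨hj, hh⟩ := mem_product.1 hx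
    exact mul_mem_permsOn (swap_mem_permsOn hp hj) (permsOn_mono (erase_subset p a) hh)
  · intro σ _
    simp [← mul_assoc]
  · intro x hx
    obtain ⟨hj, hh⟩ := mem_product.1 hx
    have hhp : x.2 p = p := (mem_permsOn_erase.1 hh).2
    simp [hhp, ← mul_assoc]
  · intro σ _
    simp [← mul_assoc]

end

section

variable {n m : ℕ}

theorem card_firstSet (h : m ≤ n) : #(firstSet n m) = m := by
  rw [firstSet, Fin.card_filter_val_lt, min_eq_right h]

theorem card_lastSet (h : m ≤ n) : #(lastSet n m) = m := by
  have hcompl : lastSet n m = (firstSet n (n - m))ᶜ := by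
    ext; simp only [firstSet, lastSet, mem_compl, mem_filter, mem_univ, true_and, not_lt]
  rw [hcompl, card_compl, Fintype.card_fin, card_firstSet (Nat.sub_le n m), Nat.sub_sub_self h]

theorem compl_firstSet (k q : ℕ) : (firstSet (k + q) k)ᶜ = lastSet (k + q) q := by
  ext; simp only [firstSet, lastSet, mem_compl, mem_filter, mem_univ, true_and]; omega

theorem firstSet_succ (h : m < n) : firstSet n (m + 1) = insert ⟨m, h⟩ (firstSet n m) := by
  ext; simp only [firstSet, mem_insert, mem_filter, mem_univ, true_and, Fin.ext_iff]; omega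

theorem lastSet_succ (h : m < n) :
    lastSet n (m + 1) = insert ⟨n - (m + 1), by omega⟩ (lastSet n m) := by
  ext; simp only [lastSet, mem_insert, mem_filter, mem_univ, true_and, Fin.ext_iff]; omega

end

section

variable {F : Type*} [Field F] {H : Type*} [AddCommGroup H] [Module F H] {n : ℕ}

theorem permMap_permMap (σ τ : Perm (Fin n)) (u : TP F H n) :
    permMap F H n σ (permMap F H n τ u) = permMap F H n (σ * τ) u :=
  PiTensorProduct.reindex_reindex _ _ u

theorem permMap_one (u : TP F H n) : permMap F H n 1 u = u := by
  simp [permMap, Perm.one_def]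

def avgOn (χ : Perm (Fin n) →* ℤˣ) (a : Finset (Fin n)) : TP F H n →ₗ[F] TP F H n :=
  (a.card.factorial : F)⁻¹ • ∑ σ ∈ permsOn n a, ((χ σ : ℤ) : F) • permMap F H n σ

def IsSemiInvariantOn (χ : Perm (Fin n) →* ℤˣ) (a : Finset (Fin n)) (u : TP F H n) : Prop :=
  ∀ σ ∈ permsOn n a, permMap F H n σ u = ((χ σ : ℤ) : F) • u

variable {χ ψ : Perm (Fin n) →* ℤˣ} {a b P Q : Finset (Fin n)} {p p₁ p₂ i j : Fin n}
  {u v : TP F H n}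

theorem symOn_eq_avgOn : symOn F H n a = (avgOn 1 a : TP F H n →ₗ[F] TP F H n) := by
  simp [symOn, avgOn]

theorem altOn_eq_avgOn : altOn F H n a = (avgOn Perm.sign a : TP F H n →ₗ[F] TP F H n) := rfl

theorem avgOn_apply (u : TP F H n) :
    avgOn χ a u
      = ((#a).factorial : F)⁻¹ • ∑ σ ∈ permsOn n a, ((χ σ : ℤ) : F) • permMap F H n σ u := by
  simp [avgOn, LinearMap.sum_apply]

theorem isSemiInvariantOn_avgOn (u : TP F H n) : IsSemiInvariantOn χ a (avgOn χ a u) := by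
  intro σ hσ
  rw [avgOn_apply, map_smul, map_sum, smul_comm ((χ σ : ℤ) : F)]
  congr 1
  rw [smul_sum, ← sum_permsOn_mul_left hσ
    (fun τ => ((χ σ : ℤ) : F) • ((χ τ : ℤ) : F) • permMap F H n τ u)]
  refine sum_congr rfl fun τ _ => ?_
  rw [map_smul, permMap_permMap, map_mul, Units.val_mul, Int.cast_mul, mul_smul,
    int_units_smul_smul_self]

theorem avgOn_eq_self [CharZero F] (hu : IsSemiInvariantOn χ a u) : avgOn χ a u = u := by
  have hterm : ∀ σ ∈ permsOn n a, ((χ σ : ℤ) : F) • permMap F H n σ u = u := fun σ hσ => by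
    rw [hu σ hσ, int_units_smul_smul_self]
  rw [avgOn_apply, sum_congr rfl hterm, sum_const, card_permsOn, ← Nat.cast_smul_eq_nsmul F,
    inv_smul_smul₀ (Nat.cast_ne_zero.2 (Nat.factorial_ne_zero _))]

theorem IsSemiInvariantOn.mono (hu : IsSemiInvariantOn χ a u) (hba : b ⊆ a) :
    IsSemiInvariantOn χ b u :=
  fun σ hσ => hu σ (permsOn_mono hba hσ)

theorem permMap_avgOn_comm {g : Perm (Fin n)} (hg : ∀ i ∈ a, g i = i) (u : TP F H n) :
    permMap F H n g (avgOn χ a u) = avgOn χ a (permMap F H n g u) := by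
  rw [avgOn_apply, avgOn_apply, map_smul, map_sum]
  refine congrArg _ (sum_congr rfl fun σ hσ => ?_)
  rw [map_smul, permMap_permMap, permMap_permMap, (commute_of_mem_permsOn hg hσ).eq]

theorem IsSemiInvariantOn.permMap {g : Perm (Fin n)} (hu : IsSemiInvariantOn χ a u)
    (hg : ∀ i ∈ a, g i = i) : IsSemiInvariantOn χ a (permMap F H n g u) := by
  intro σ hσ
  rw [permMap_permMap, ← (commute_of_mem_permsOn hg hσ).eq, ← permMap_permMap, hu σ hσ,
    map_smul]

theorem IsSemiInvariantOn.avgOn (hu : IsSemiInvariantOn ψ b u) (hab : Disjoint a b) :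
    IsSemiInvariantOn ψ b (avgOn χ a u) := by
  intro σ hσ
  have hfix : ∀ i ∈ a, σ i = i := fun i hi => mem_permsOn.1 hσ i (disjoint_left.1 hab hi)
  rw [permMap_avgOn_comm hfix, hu σ hσ, map_smul]

theorem isSemiInvariantOn_of_mem_Hgen (hv : v ∈ Hgen F H n a) :
    IsSemiInvariantOn 1 a v ∧ IsSemiInvariantOn Perm.sign aᶜ v := by
  obtain ⟨w, rfl⟩ := hv
  rw [LinearMap.comp_apply, symOn_eq_avgOn, altOn_eq_avgOn]
  exact ⟨isSemiInvariantOn_avgOn _,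
    (isSemiInvariantOn_avgOn w).avgOn disjoint_compl_right⟩

theorem card_smul_avgOn [CharZero F] (hp : p ∈ a)
    (hu : IsSemiInvariantOn χ (a.erase p) u) :
    (#a : F) • avgOn χ a u
      = ∑ j ∈ a, ((χ (swap p j) : ℤ) : F) • permMap F H n (swap p j) u := by
  have hterm : ∀ j, ∀ h ∈ permsOn n (a.erase p),
      ((χ (swap p j * h) : ℤ) : F) • permMap F H n (swap p j * h) u
        = ((χ (swap p j) : ℤ) : F) • permMap F H n (swap p j) u := fun j h hh => by
    rw [← permMap_permMap, hu h hh, map_smul, map_mul, Units.val_mul, Int.cast_mul, mul_smul,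
      int_units_smul_smul_self]
  have hfact : (#a : F) * ((#a).factorial : F)⁻¹ * ((#a - 1).factorial : F) = 1 := by
    rw [mul_right_comm, ← Nat.cast_mul, Nat.mul_factorial_pred (card_ne_zero_of_mem hp),
      mul_inv_cancel₀ (Nat.cast_ne_zero.2 (Nat.factorial_ne_zero _))]
  rw [avgOn_apply, sum_permsOn_eq_sum_sum_swap_mul hp,
    sum_congr rfl fun j _ => sum_congr rfl (hterm j), smul_sum, smul_sum]
  refine sum_congr rfl fun j _ => ?_
  rw [sum_const, card_permsOn, card_erase_of_mem hp, ← Nat.cast_smul_eq_nsmul F, smul_smul,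
    smul_smul, hfact, one_smul]

theorem card_smul_avgOn_card_smul_avgOn_insert [CharZero F] (hab : Disjoint a b)
    (hp : p ∈ a) (ha : IsSemiInvariantOn χ a u) (hb : IsSemiInvariantOn ψ b u) :
    (#a : F) • avgOn χ a ((#(insert p b) : F) • avgOn ψ (insert p b) u)
      = (#a : F) • u + ∑ j ∈ b, ∑ i ∈ a, ((ψ (swap p j) : ℤ) : F) • ((χ (swap p i) : ℤ) : F) •
          permMap F H n (swap p i) (permMap F H n (swap p j) u) := by
  have hpb : p ∉ b := disjoint_left.1 hab hp
  have hinner : (#(insert p b) : F) • avgOn ψ (insert p b) u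
      = ∑ j ∈ insert p b, ((ψ (swap p j) : ℤ) : F) • permMap F H n (swap p j) u :=
    card_smul_avgOn (mem_insert_self p b) (by rwa [erase_insert hpb])
  have houter : ∀ j ∈ b, (#a : F) • avgOn χ a (permMap F H n (swap p j) u)
      = ∑ i ∈ a, ((χ (swap p i) : ℤ) : F) •
          permMap F H n (swap p i) (permMap F H n (swap p j) u) := by
    intro j hj
    refine card_smul_avgOn hp ((ha.mono (erase_subset p a)).permMap fun i hi => ?_)
    exact swap_apply_of_ne_of_ne (ne_of_mem_erase hi)
      (fun h => disjoint_left.1 hab (mem_of_mem_erase hi) (h ▸ hj))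
  rw [hinner, map_sum, smul_sum, sum_insert hpb, swap_self, ← Perm.one_def, map_one, Units.val_one,
    Int.cast_one, one_smul, permMap_one, avgOn_eq_self ha]
  congr 1
  refine sum_congr rfl fun j hj => ?_
  rw [map_smul, smul_comm, houter j hj, smul_sum]

theorem permMap_swap_permMap_swap (hPQ : Disjoint P Q) (hp₁ : p₁ ∈ P) (hp₂ : p₂ ∈ Q) (hi : i ∈ P)
    (hj : j ∈ Q) (hP : IsSemiInvariantOn 1 P v) (hQ : IsSemiInvariantOn Perm.sign Q v) :
    permMap F H n (swap p₁ i) (permMap F H n (swap p₁ j) v)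
      = ((Perm.sign (swap p₂ j) : ℤ) : F) •
          permMap F H n (swap p₂ j) (permMap F H n (swap p₂ i) v) := by
  have hne : ∀ {x y}, x ∈ P → y ∈ Q → x ≠ y := fun hx hy h => disjoint_left.1 hPQ hx (h ▸ hy)
  rw [permMap_permMap, swap_mul_swap_eq (hne hp₁ hp₂) (hne hp₁ hj) (hne hi hp₂) (hne hi hj),
    ← permMap_permMap (swap p₂ j * swap p₂ i), ← permMap_permMap (swap p₁ i),
    hQ _ (swap_mem_permsOn hp₂ hj), map_smul, hP _ (swap_mem_permsOn hp₁ hi), MonoidHom.one_apply,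
    Units.val_one, Int.cast_one, one_smul, map_smul, permMap_permMap]

theorem weitzenbock_of_isSemiInvariantOn [CharZero F] (hPQ : Disjoint P Q) (hp₁ : p₁ ∈ P)
    (hp₂ : p₂ ∈ Q) (hP : IsSemiInvariantOn 1 P v) (hQ : IsSemiInvariantOn Perm.sign Q v) :
    (#P : F) • symOn F H n P ((#(insert p₁ Q) : F) • altOn F H n (insert p₁ Q) v)
      + (#Q : F) • altOn F H n Q ((#(insert p₂ P) : F) • symOn F H n (insert p₂ P) v)
      = ((#P + #Q : ℕ) : F) • v := by
  simp only [symOn_eq_avgOn, altOn_eq_avgOn]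
  rw [card_smul_avgOn_card_smul_avgOn_insert hPQ hp₁ hP hQ,
    card_smul_avgOn_card_smul_avgOn_insert hPQ.symm hp₂ hQ hP, sum_comm (s := P),
    add_add_add_comm, ← sum_add_distrib, sum_eq_zero, add_zero, Nat.cast_add, add_smul]
  refine fun j hj => ?_
  rw [← sum_add_distrib]
  refine sum_eq_zero fun i hi => ?_
  have hp₁j : p₁ ≠ j := fun h => disjoint_left.1 hPQ hp₁ (h ▸ hj)
  rw [permMap_swap_permMap_swap hPQ hp₁ hp₂ hi hj hP hQ, Perm.sign_swap hp₁j]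
  simp

end

/-- Weitzenböck-type identity: For all natural numbers `k ≥ 1` and `q ≥ 1`
with `n = k + q`, the identity `d̆*_q ∘ d̆_q + d̆_{q-1} ∘ d̆*_{q-1} = (k+q)·id`
holds on `H_{k,q}`. -/
theorem weitzenbock (k q : ℕ) (hk : 1 ≤ k) (hq : 1 ≤ q) :
    ∀ v ∈ Hmix F H (k + q) k,
      dStarOp F H (k + q) k (dOp F H (k + q) (q + 1) v) +
        dOp F H (k + q) q (dStarOp F H (k + q) (k + 1) v) = ((k + q : ℕ) : F) • v := by
  intro v hv
  obtain ⟨hsym, halt⟩ := isSemiInvariantOn_of_mem_Hgen hv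
  rw [compl_firstSet] at halt
  have hp₁ : (⟨k + q - (q + 1), by omega⟩ : Fin (k + q)) ∈ firstSet (k + q) k := by
    simp only [firstSet, mem_filter, mem_univ, true_and]; omega
  have hp₂ : (⟨k, by omega⟩ : Fin (k + q)) ∈ lastSet (k + q) q := by
    simp only [lastSet, mem_filter, mem_univ, true_and]; omega
  have key := weitzenbock_of_isSemiInvariantOn (compl_firstSet k q ▸ disjoint_compl_right)
    hp₁ hp₂ hsym halt
  rw [← lastSet_succ (by omega), ← firstSet_succ (by omega), card_firstSet (by omega),
    card_lastSet (by omega), card_firstSet (by omega), card_lastSet (by omega)] at key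
  simp only [dOp, dStarOp, LinearMap.smul_apply]
  exact key

end
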